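/- arXiv:1803.11549 — 2 statements merged into one kernel-verified Lean document; each statement's English description precedes it below -/
import Mathlib

section
/- Let A be a finite-dimensional ℤ/2ℤ-graded associative algebra over a field of characteristic zero with an odd invariant scalar product g, let (e_μ), (e^μ) be homogeneous dual bases with g(e^μ, e_ν) = δ^μ_ν, and let I be an odd anti-self-adjoint operator on A. Then for every homogeneous a ∈ A: Σ_μ (−1)^{|e^μ|(|a|+1)} (I e^μ)·a·e_μ + Σ_μ (−1)^{|e^μ|(|a|+1) + |a| + |e^μ|} e^μ·a·(I e_μ) = 0. -/
/-- A finite-dimensional ℤ/2ℤ-graded associative algebra `A = A₀ ⊕ A₁` (possibly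
non-unital) with an odd invariant scalar product `g`: `g` is non-degenerate, vanishes on
`A₀ × A₀` and `A₁ × A₁`, is invariant (`g(ab,c) = g(a,bc)`) and supersymmetric (which,
given the vanishing on equal parities, amounts to plain symmetry). -/
structure OddFrob (k A : Type*) [Field k] [NonUnitalRing A] [Module k A]
    [SMulCommClass k A A] [IsScalarTower k A A] where
  A0 : Submodule k A
  A1 : Submodule k A
  compl : IsCompl A0 A1
  mul00 : ∀ x ∈ A0, ∀ y ∈ A0, x * y ∈ A0
  mul01 : ∀ x ∈ A0, ∀ y ∈ A1, x * y ∈ A1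
  mul10 : ∀ x ∈ A1, ∀ y ∈ A0, x * y ∈ A1
  mul11 : ∀ x ∈ A1, ∀ y ∈ A1, x * y ∈ A0
  g : A →ₗ[k] A →ₗ[k] k
  nondeg : ∀ x, (∀ y, g x y = 0) → x = 0
  zero00 : ∀ x ∈ A0, ∀ y ∈ A0, g x y = 0
  zero11 : ∀ x ∈ A1, ∀ y ∈ A1, g x y = 0
  invar : ∀ x y z, g (x * y) z = g x (y * z)
  symm : ∀ x y, g x y = g y x

variable {k A : Type*} [Field k] [NonUnitalRing A] [Module k A]
  [SMulCommClass k A A] [IsScalarTower k A A]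

/-- `a` is homogeneous of parity `p` (mod 2). -/
def OddFrob.Homog (S : OddFrob k A) (p : ℕ) (a : A) : Prop :=
  if p % 2 = 0 then a ∈ S.A0 else a ∈ S.A1

/-- Homogeneous dual bases `(e_μ)`, `(e^μ)` of `A`: `e^μ = f μ` is homogeneous of parity
`q μ`, `e_μ = e μ` of the opposite parity, and `g(e^μ, e_ν) = δ^μ_ν`. -/
def OddFrob.DualBases (S : OddFrob k A) {ι : Type*} [Fintype ι] [DecidableEq ι]
    (e : Module.Basis ι k A) (f : ι → A) (q : ι → ℕ) : Prop :=
  (∀ μ, S.Homog (q μ) (f μ)) ∧ (∀ μ, S.Homog (q μ + 1) (e μ)) ∧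
  (∀ μ ν, S.g (f μ) (e ν) = if μ = ν then 1 else 0)

/-- `I` is odd: it exchanges the even and odd parts. -/
def OddFrob.IsOddOp (S : OddFrob k A) (I : A →ₗ[k] A) : Prop :=
  (∀ x ∈ S.A0, I x ∈ S.A1) ∧ (∀ x ∈ S.A1, I x ∈ S.A0)

/-- `I` is anti-self-adjoint: `g(Ia,b) + (−1)^{|a|} g(a,Ib) = 0` for homogeneous `a`. -/
def OddFrob.IsASA (S : OddFrob k A) (I : A →ₗ[k] A) : Prop :=
  ∀ (p : ℕ) (x : A), S.Homog p x → ∀ y, S.g (I x) y + (-1 : k) ^ p * S.g x (I y) = 0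


/-!
Expand `I e^μ` in the basis `(e^ν)` and `I e_μ` in the basis `(e_ν)`, so that
both sums become combinations of the monomials `e^μ·a·e_ν`. The coefficient of each monomial is
`±g(I e^ν, e_μ) ± g(e^ν, I e_μ)`: when `e^ν` and `e_μ` have opposite parities both pairings vanish
because `g` is odd and `I` is odd, and otherwise anti-self-adjointness makes them cancel, the signs
agreeing because `|e^μ| = |e^ν| + 1`.
-/

open Finset

namespace Module.Basis

variable {R M ι : Type*} [Fintype ι] [DecidableEq ι]

theorem sum_bilin_smul_eq_self [CommSemiring R] [AddCommMonoid M] [Module R M]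
    (B : M →ₗ[R] M →ₗ[R] R) (e : Basis ι R M) {f : ι → M}
    (hfe : ∀ μ ν, B (f μ) (e ν) = if μ = ν then 1 else 0) (x : M) : ∑ ν, B (f ν) x • e ν = x := by
  have repr_eq : ∀ ν, B (f ν) x = e.repr x ν := fun ν => by
    conv_lhs => rw [← e.sum_repr x]
    simp [hfe, -Module.Basis.sum_repr]
  simp only [repr_eq, e.sum_repr]

theorem sum_bilin_smul_dual_eq_self [CommRing R] [AddCommGroup M] [Module R M]
    {B : M →ₗ[R] M →ₗ[R] R} (hB : ∀ x, (∀ y, B x y = 0) → x = 0) (e : Basis ι R M) {f : ι → M}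
    (hfe : ∀ μ ν, B (f μ) (e ν) = if μ = ν then 1 else 0) (x : M) :
    ∑ ν, B x (e ν) • f ν = x := by
  refine (sub_eq_zero.mp (hB _ fun y => ?_)).symm
  suffices B (x - ∑ ν, B x (e ν) • f ν) = 0 from LinearMap.congr_fun this y
  refine e.ext fun τ => ?_
  simp [hfe]

end Module.Basis

theorem neg_one_pow_eq_of_mod_two_ne {R : Type*} [Monoid R] [HasDistribNeg R] {m n : ℕ}
    (hmn : m % 2 ≠ n % 2) (p : ℕ) :
    (-1 : R) ^ (m * (p + 1) + p + m) = (-1) ^ (n * (p + 1)) * (-1) ^ n := by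
  rw [← pow_add]
  apply neg_one_pow_congr
  simp only [Nat.even_add, Nat.even_mul, Nat.even_add_one]
  simp only [Nat.even_iff]
  omega

namespace OddFrob

variable (S : OddFrob k A)

theorem g_eq_zero_of_homog {p r : ℕ} {x y : A} (hpr : p % 2 = r % 2) (hx : S.Homog p x)
    (hy : S.Homog r y) : S.g x y = 0 := by
  unfold Homog at hx hy
  rw [← hpr] at hy
  split_ifs at hx hy
  · exact S.zero00 x hx y hy
  · exact S.zero11 x hx y hy

theorem IsOddOp.homog_apply {S : OddFrob k A} {I : A →ₗ[k] A} (hI : S.IsOddOp I) {p : ℕ}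
    {x : A} (hx : S.Homog p x) : S.Homog (p + 1) (I x) := by
  unfold Homog at *
  rcases Nat.mod_two_eq_zero_or_one p with h | h
  · rw [if_pos h] at hx
    rw [if_neg (by omega)]
    exact hI.1 x hx
  · rw [if_neg (by omega)] at hx
    rw [if_pos (by omega)]
    exact hI.2 x hx

variable {S} {ι : Type*} [Fintype ι] [DecidableEq ι] {e : Module.Basis ι k A} {f : ι → A}
  {q : ι → ℕ}

theorem DualBases.sum_smul_mul_mul_left (hdb : S.DualBases e f q) (x : ι → A) (s : ι → k)
    (a : A) : ∑ μ, s μ • (x μ * a * e μ)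
      = ∑ μ, ∑ ν, (s ν * S.g (x ν) (e μ)) • (f μ * a * e ν) := by
  rw [sum_comm]
  refine sum_congr rfl fun μ _ => ?_
  conv_lhs => rw [← e.sum_bilin_smul_dual_eq_self S.nondeg hdb.2.2 (x μ)]
  simp only [sum_mul, smul_sum, smul_mul_assoc, smul_smul]

theorem DualBases.sum_smul_mul_mul_right (hdb : S.DualBases e f q) (y : ι → A) (s : ι → k)
    (a : A) : ∑ μ, s μ • (f μ * a * y μ)
      = ∑ μ, ∑ ν, (s μ * S.g (f ν) (y μ)) • (f μ * a * e ν) := by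
  refine sum_congr rfl fun μ _ => ?_
  conv_lhs => rw [← e.sum_bilin_smul_eq_self S.g hdb.2.2 (y μ)]
  simp only [mul_sum, smul_sum, mul_smul_comm, smul_smul]

theorem DualBases.coeff_add_coeff_eq_zero {I : A →ₗ[k] A} (hdb : S.DualBases e f q)
    (hodd : S.IsOddOp I) (hasa : S.IsASA I) (pa : ℕ) (μ ν : ι) :
    (-1 : k) ^ (q ν * (pa + 1)) * S.g (I (f ν)) (e μ)
      + (-1 : k) ^ (q μ * (pa + 1) + pa + q μ) * S.g (f ν) (I (e μ)) = 0 := by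
  obtain ⟨hf, he, -⟩ := hdb
  by_cases hq : q ν % 2 = q μ % 2
  · rw [S.g_eq_zero_of_homog (by omega) (hodd.homog_apply (hf ν)) (he μ),
      S.g_eq_zero_of_homog (by omega) (hf ν) (hodd.homog_apply (he μ))]
    ring
  · rw [neg_one_pow_eq_of_mod_two_ne (Ne.symm hq), ← neg_eq_of_add_eq_zero_left
      (hasa _ _ (hf ν) (e μ))]
    ring

end OddFrob

theorem dual_bases_I_cancellation_general
    {k A : Type*} [Field k] [NonUnitalRing A] [Module k A]
    [SMulCommClass k A A] [IsScalarTower k A A]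
    (S : OddFrob k A) {ι : Type*} [Fintype ι] [DecidableEq ι]
    (e : Module.Basis ι k A) (f : ι → A) (q : ι → ℕ) (hdb : S.DualBases e f q)
    (I : A →ₗ[k] A) (hodd : S.IsOddOp I) (hasa : S.IsASA I)
    (pa : ℕ) (a : A) :
    (∑ μ, (-1 : k) ^ (q μ * (pa + 1)) • (I (f μ) * a * e μ))
      + ∑ μ, (-1 : k) ^ (q μ * (pa + 1) + pa + q μ) • (f μ * a * I (e μ)) = 0 := by
  rw [hdb.sum_smul_mul_mul_left (fun μ => I (f μ)),
    hdb.sum_smul_mul_mul_right (fun μ => I (e μ)), ← sum_add_distrib]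
  refine sum_eq_zero fun μ _ => ?_
  rw [← sum_add_distrib]
  refine sum_eq_zero fun ν _ => ?_
  rw [← add_smul, hdb.coeff_add_coeff_eq_zero hodd hasa, zero_smul]

/-- For an odd anti-self-adjoint operator `I`, homogeneous dual bases
and homogeneous `a`:
`Σ_μ (−1)^{|e^μ|(|a|+1)} (I e^μ)·a·e_μ + Σ_μ (−1)^{|e^μ|(|a|+1)+|a|+|e^μ|} e^μ·a·(I e_μ) = 0`. -/
theorem dual_bases_I_cancellation
    {k A : Type*} [Field k] [CharZero k] [NonUnitalRing A] [Module k A]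
    [SMulCommClass k A A] [IsScalarTower k A A] [FiniteDimensional k A]
    (S : OddFrob k A) {ι : Type*} [Fintype ι] [DecidableEq ι]
    (e : Module.Basis ι k A) (f : ι → A) (q : ι → ℕ) (hdb : S.DualBases e f q)
    (I : A →ₗ[k] A) (hodd : S.IsOddOp I) (hasa : S.IsASA I)
    (pa : ℕ) (a : A) (ha : S.Homog pa a) :
    (∑ μ, (-1 : k) ^ (q μ * (pa + 1)) • (I (f μ) * a * e μ))
      + ∑ μ, (-1 : k) ^ (q μ * (pa + 1) + pa + q μ) • (f μ * a * I (e μ)) = 0 :=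
  dual_bases_I_cancellation_general S e f q hdb I hodd hasa pa a
end

section
/- Let k be a field of characteristic zero and N ≥ 1, and let Q(N) be the queer matrix superalgebra with odd invariant scalar product g(X,Y) = otr(X·Y). Let (e_μ), (e^μ) be homogeneous dual bases of Q(N) with g(e^μ, e_ν) = δ^μ_ν. Then for every even element a ∈ Q(N): Σ_μ (−1)^{|e^μ|} e^μ·a·e_μ = 0. (This cancellation — the terms coming from the even basis vector E^i_j and the odd basis vector ΠE^i_j cancel pairwise — is the reason why only stable ribbon graphs all of whose cyclically ordered subsets of flags have odd cardinality contribute to the partition function of Q(N).) -/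
open Matrix

/-- `2N×2N` matrices over `k`, written in `N×N` block form. -/
abbrev MM (k : Type*) (N : ℕ) := Matrix (Fin N ⊕ Fin N) (Fin N ⊕ Fin N) k

variable (k : Type*) [Field k] (N : ℕ)

/-- The block matrix `J = [[0, 1],[1, 0]]`. -/
noncomputable def Jmat : MM k N := Matrix.fromBlocks 0 1 1 0

/-- The queer matrix superalgebra `Q(N)`: matrices commuting with `J`, i.e. block
matrices `[[A,B],[B,A]]`. -/
noncomputable def QN : Submodule k (MM k N) :=
  LinearMap.ker (LinearMap.mulRight k (Jmat k N) - LinearMap.mulLeft k (Jmat k N))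

/-- The upper-left block, as a linear map. -/
def blk11 : MM k N →ₗ[k] Matrix (Fin N) (Fin N) k where
  toFun X := X.toBlocks₁₁
  map_add' _ _ := rfl
  map_smul' _ _ := rfl

/-- The upper-right block, as a linear map. -/
def blk12 : MM k N →ₗ[k] Matrix (Fin N) (Fin N) k where
  toFun X := X.toBlocks₁₂
  map_add' _ _ := rfl
  map_smul' _ _ := rfl

/-- The lower-left block, as a linear map. -/
def blk21 : MM k N →ₗ[k] Matrix (Fin N) (Fin N) k where
  toFun X := X.toBlocks₂₁
  map_add' _ _ := rfl
  map_smul' _ _ := rfl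

/-- The lower-right block, as a linear map. -/
def blk22 : MM k N →ₗ[k] Matrix (Fin N) (Fin N) k where
  toFun X := X.toBlocks₂₂
  map_add' _ _ := rfl
  map_smul' _ _ := rfl

/-- The even part of `Q(N)`: block matrices `[[A,0],[0,A]]`. -/
noncomputable def QN0 : Submodule k (MM k N) :=
  QN k N ⊓ LinearMap.ker (blk12 k N) ⊓ LinearMap.ker (blk21 k N)

/-- The odd part of `Q(N)`: block matrices `[[0,B],[B,0]]`. -/
noncomputable def QN1 : Submodule k (MM k N) :=
  QN k N ⊓ LinearMap.ker (blk11 k N) ⊓ LinearMap.ker (blk22 k N)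

/-- The odd trace: `otr([[A,B],[B,A]]) = tr B`. -/
noncomputable def otr : MM k N → k := fun X => Matrix.trace X.toBlocks₁₂

/-- `X` is a homogeneous element of `Q(N)` of parity `p`. -/
noncomputable def QHomog (p : ℕ) (X : MM k N) : Prop :=
  if p % 2 = 0 then X ∈ QN0 k N else X ∈ QN1 k N

/-! Since `Σ_μ e^μ ⊗ e_μ` is the canonical copairing of `g`, the map `M ↦ Σ_μ e^μ M e_μ` does not
depend on the dual bases. On the standard dual pairs `(E^i_j, ΠE^j_i)`, `(ΠE^i_j, E^j_i)` it is
`M ↦ tr(M₁₂ + M₂₁) · 1 + tr(M₁₁ + M₂₂) · Π`, which only sees traces of blocks. Conjugation by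
`P = diag(1, -1)` is `(-1)^parity` on homogeneous elements, so the signed sum is `-(Σ_μ e^μ (aP) e_μ) P`,
and `aP = diag(A, -A)` has all those traces zero. -/

theorem Matrix.sum_smul_single_one {m n α : Type*} [Fintype m] [Fintype n] [DecidableEq m]
    [DecidableEq n] [Semiring α] (A : Matrix m n α) : ∑ i, ∑ j, A i j • single i j (1 : α) = A := by
  simp_rw [smul_single, smul_eq_mul, mul_one]
  exact (matrix_eq_sum_single A).symm

theorem Matrix.sum_single_mul_mul_single {n α : Type*} [Fintype n] [DecidableEq n] [Semiring α]
    (X : Matrix n n α) : ∑ i, ∑ j, single j i (1 : α) * X * single i j 1 = trace X • 1 := by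
  simp_rw [single_mul_mul_single, one_mul, mul_one, sum_single_eq_diagonal fun _ => X _ _,
    ← smul_one_eq_diagonal, trace, Finset.sum_smul, diag]

section QueerBlocks

variable {k : Type*} [Field k] {N : ℕ}

theorem fromBlocks_mem_QN_iff {A B C D : Matrix (Fin N) (Fin N) k} :
    fromBlocks A B C D ∈ QN k N ↔ C = B ∧ D = A := by
  simp only [QN, Jmat, LinearMap.mem_ker, LinearMap.sub_apply, LinearMap.mulRight_apply,
    LinearMap.mulLeft_apply, sub_eq_zero, fromBlocks_multiply, Matrix.mul_zero, Matrix.mul_one,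
    Matrix.zero_mul, Matrix.one_mul, zero_add, add_zero, fromBlocks_inj]
  tauto

theorem mem_QN_iff {z : MM k N} : z ∈ QN k N ↔ ∃ A B, z = fromBlocks A B B A := by
  refine ⟨fun hz => ⟨z.toBlocks₁₁, z.toBlocks₁₂, ?_⟩, ?_⟩
  · rw [← fromBlocks_toBlocks z, fromBlocks_mem_QN_iff] at hz
    conv_lhs => rw [← fromBlocks_toBlocks z, hz.1, hz.2]
  · rintro ⟨A, B, rfl⟩
    exact fromBlocks_mem_QN_iff.mpr ⟨rfl, rfl⟩

theorem mem_QN0_iff {z : MM k N} : z ∈ QN0 k N ↔ ∃ A, z = fromBlocks A 0 0 A := by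
  simp only [QN0, Submodule.mem_inf, LinearMap.mem_ker, mem_QN_iff]
  constructor
  · rintro ⟨⟨⟨A, B, rfl⟩, hB : B = 0⟩, -⟩
    exact ⟨A, by rw [hB]⟩
  · rintro ⟨A, rfl⟩
    exact ⟨⟨⟨A, 0, rfl⟩, rfl⟩, rfl⟩

theorem mem_QN1_iff {z : MM k N} : z ∈ QN1 k N ↔ ∃ B, z = fromBlocks 0 B B 0 := by
  simp only [QN1, Submodule.mem_inf, LinearMap.mem_ker, mem_QN_iff]
  constructor
  · rintro ⟨⟨⟨A, B, rfl⟩, hA : A = 0⟩, -⟩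
    exact ⟨B, by rw [hA]⟩
  · rintro ⟨B, rfl⟩
    exact ⟨⟨⟨0, B, rfl⟩, rfl⟩, rfl⟩

theorem otr_fromBlocks_mul_fromBlocks (A B A' B' : Matrix (Fin N) (Fin N) k) :
    otr k N (fromBlocks A B B A * fromBlocks A' B' B' A') = trace (A * B') + trace (B * A') := by
  simp [otr, fromBlocks_multiply, trace_add]

theorem otr_mul_comm {x y : MM k N} (hx : x ∈ QN k N) (hy : y ∈ QN k N) :
    otr k N (x * y) = otr k N (y * x) := by
  obtain ⟨A, B, rfl⟩ := mem_QN_iff.mp hx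
  obtain ⟨A', B', rfl⟩ := mem_QN_iff.mp hy
  rw [otr_fromBlocks_mul_fromBlocks, otr_fromBlocks_mul_fromBlocks, trace_mul_comm A,
    trace_mul_comm B, add_comm]

end QueerBlocks

section StandardBasis

variable {k : Type*} [Field k] {N : ℕ}

def evenLift : Matrix (Fin N) (Fin N) k →ₗ[k] MM k N where
  toFun A := fromBlocks A 0 0 A
  map_add' A A' := by simp [fromBlocks_add]
  map_smul' c A := by simp [fromBlocks_smul]

def oddLift : Matrix (Fin N) (Fin N) k →ₗ[k] MM k N where
  toFun B := fromBlocks 0 B B 0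
  map_add' B B' := by simp [fromBlocks_add]
  map_smul' c B := by simp [fromBlocks_smul]

theorem evenLift_apply (A : Matrix (Fin N) (Fin N) k) : evenLift A = fromBlocks A 0 0 A := rfl

theorem oddLift_apply (B : Matrix (Fin N) (Fin N) k) : oddLift B = fromBlocks 0 B B 0 := rfl

theorem evenLift_mem_QN (A : Matrix (Fin N) (Fin N) k) : evenLift A ∈ QN k N :=
  mem_QN_iff.mpr ⟨A, 0, rfl⟩

theorem oddLift_mem_QN (B : Matrix (Fin N) (Fin N) k) : oddLift B ∈ QN k N :=
  mem_QN_iff.mpr ⟨0, B, rfl⟩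

theorem eq_sum_otr_mul_smul_lift {z : MM k N} (hz : z ∈ QN k N) :
    z = ∑ i, ∑ j, (otr k N (oddLift (single j i 1) * z) • evenLift (single i j 1) +
      otr k N (evenLift (single j i 1) * z) • oddLift (single i j 1)) := by
  obtain ⟨A, B, rfl⟩ := mem_QN_iff.mp hz
  have hA : ∀ i j, otr k N (oddLift (single j i 1) * fromBlocks A B B A) = A i j := by
    intro i j
    simp [oddLift_apply, otr_fromBlocks_mul_fromBlocks, trace_single_mul]
  have hB : ∀ i j, otr k N (evenLift (single j i 1) * fromBlocks A B B A) = B i j := by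
    intro i j
    simp [evenLift_apply, otr_fromBlocks_mul_fromBlocks, trace_single_mul]
  simp_rw [hA, hB, Finset.sum_add_distrib, ← map_smul, ← map_sum, sum_smul_single_one,
    evenLift_apply, oddLift_apply, fromBlocks_add, add_zero, zero_add]

theorem eq_zero_of_forall_otr_mul_eq_zero {z : MM k N} (hz : z ∈ QN k N)
    (h : ∀ x ∈ QN k N, otr k N (x * z) = 0) : z = 0 := by
  rw [eq_sum_otr_mul_smul_lift hz]
  simp [h _ (oddLift_mem_QN _), h _ (evenLift_mem_QN _)]

end StandardBasis

section DualBases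

variable {k : Type*} [Field k] {N : ℕ}

def otrLinearMap : MM k N →ₗ[k] k := (traceLinearMap (Fin N) k k).comp (blk12 k N)

theorem otrLinearMap_apply (x : MM k N) : otrLinearMap x = otr k N x := rfl

variable {ι : Type*} [Fintype ι] [DecidableEq ι] (e : Module.Basis ι k ↥(QN k N))
  (f : ι → ↥(QN k N))

theorem sum_otr_mul_smul_dual
    (hdual : ∀ μ ν, otr k N ((f μ : MM k N) * (e ν : MM k N)) = if μ = ν then 1 else 0)
    {x : MM k N} (hx : x ∈ QN k N) :
    ∑ μ, otr k N (x * e μ) • (f μ : MM k N) = x := by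
  set z := x - ∑ μ, otr k N (x * e μ) • (f μ : MM k N) with hz_def
  have hz : z ∈ QN k N :=
    (QN k N).sub_mem hx ((QN k N).sum_mem fun μ _ => (QN k N).smul_mem _ (f μ).2)
  have hze : ∀ ν, otr k N (e ν * z) = 0 := by
    intro ν
    rw [otr_mul_comm (e ν).2 hz, hz_def, sub_mul, Finset.sum_mul, ← otrLinearMap_apply, map_sub,
      map_sum]
    simp_rw [smul_mul_assoc, map_smul, otrLinearMap_apply, hdual]
    simp
  have hL : otrLinearMap ∘ₗ LinearMap.mulRight k z ∘ₗ (QN k N).subtype = 0 := e.ext hze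
  have : z = 0 := eq_zero_of_forall_otr_mul_eq_zero hz fun y hy =>
    LinearMap.congr_fun hL ⟨y, hy⟩
  rwa [hz_def, sub_eq_zero, eq_comm] at this

end DualBases

section Casimir

variable {k : Type*} [Field k] {N : ℕ}

theorem sum_oddLift_mul_mul_evenLift_add_evenLift_mul_mul_oddLift (M : MM k N) :
    ∑ i, ∑ j, (oddLift (single j i 1) * M * evenLift (single i j 1) +
      evenLift (single j i 1) * M * oddLift (single i j 1)) =
    evenLift (trace (M.toBlocks₁₂ + M.toBlocks₂₁) • 1) +
      oddLift (trace (M.toBlocks₁₁ + M.toBlocks₂₂) • 1) := by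
  have hterm : ∀ i j, oddLift (single j i 1) * M * evenLift (single i j 1) +
      evenLift (single j i 1) * M * oddLift (single i j 1) =
      evenLift (single j i 1 * (M.toBlocks₁₂ + M.toBlocks₂₁) * single i j (1 : k)) +
      oddLift (single j i 1 * (M.toBlocks₁₁ + M.toBlocks₂₂) * single i j (1 : k)) := by
    intro i j
    conv_lhs => rw [← fromBlocks_toBlocks M]
    simp only [evenLift_apply, oddLift_apply, fromBlocks_multiply, fromBlocks_add]
    simp [Matrix.mul_add, Matrix.add_mul, add_comm]
  simp_rw [hterm, Finset.sum_add_distrib, ← map_sum, sum_single_mul_mul_single]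

variable {ι : Type*} [Fintype ι] [DecidableEq ι] (e : Module.Basis ι k ↥(QN k N))
  (f : ι → ↥(QN k N))

theorem sum_dual_mul_mul
    (hdual : ∀ μ ν, otr k N ((f μ : MM k N) * (e ν : MM k N)) = if μ = ν then 1 else 0)
    (M : MM k N) :
    ∑ μ, (f μ : MM k N) * M * (e μ : MM k N) =
      evenLift (trace (M.toBlocks₁₂ + M.toBlocks₂₁) • 1) +
        oddLift (trace (M.toBlocks₁₁ + M.toBlocks₂₂) • 1) := by
  rw [← sum_oddLift_mul_mul_evenLift_add_evenLift_mul_mul_oddLift]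
  calc ∑ μ, (f μ : MM k N) * M * e μ
      = ∑ μ, (f μ : MM k N) * M * ∑ i, ∑ j,
          (otr k N (oddLift (single j i 1) * (e μ : MM k N)) • evenLift (single i j 1) +
            otr k N (evenLift (single j i 1) * (e μ : MM k N)) • oddLift (single i j 1)) := by
        conv_lhs => enter [2, μ]; rw [eq_sum_otr_mul_smul_lift (e μ).2]
    _ = ∑ i, ∑ j,
          ((∑ μ, otr k N (oddLift (single j i 1) * (e μ : MM k N)) • (f μ : MM k N)) * M *
              evenLift (single i j 1) +
            (∑ μ, otr k N (evenLift (single j i 1) * (e μ : MM k N)) • (f μ : MM k N)) * M *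
              oddLift (single i j 1)) := by
        simp only [Finset.mul_sum, Finset.sum_mul, mul_add, smul_mul_assoc, mul_smul_comm,
          Finset.sum_add_distrib]
        congr 1 <;> exact Finset.sum_comm.trans (Finset.sum_congr rfl fun _ _ => Finset.sum_comm)
    _ = _ := by
        simp_rw [sum_otr_mul_smul_dual e f hdual (oddLift_mem_QN _),
          sum_otr_mul_smul_dual e f hdual (evenLift_mem_QN _)]

end Casimir

section Parity

variable {k : Type*} [Field k] {N : ℕ}

def parityMat : MM k N := fromBlocks 1 0 0 (-1)

theorem parityMat_mul_mul_parityMat {p : ℕ} {X : MM k N} (hX : QHomog k N p X) :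
    parityMat * X * parityMat = (-1 : k) ^ p • X := by
  unfold QHomog at hX
  split_ifs at hX with hp
  · obtain ⟨A, rfl⟩ := mem_QN0_iff.mp hX
    simp [parityMat, fromBlocks_multiply, (Nat.even_iff.mpr hp).neg_one_pow]
  · obtain ⟨B, rfl⟩ := mem_QN1_iff.mp hX
    have hodd : Odd p := Nat.odd_iff.mpr (by omega)
    simp [parityMat, fromBlocks_multiply, hodd.neg_one_pow, fromBlocks_neg]

end Parity

theorem queer_algebra_even_insertion_vanishes_general
    (k : Type*) [Field k] (N : ℕ)
    {ι : Type*} [Fintype ι] [DecidableEq ι]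
    (e : Module.Basis ι k ↥(QN k N)) (f : ι → ↥(QN k N)) (q : ι → ℕ)
    (he : ∀ μ, QHomog k N (q μ + 1) (e μ : MM k N))
    (hdual : ∀ μ ν, otr k N ((f μ : MM k N) * (e ν : MM k N)) =
      if μ = ν then 1 else 0)
    (a : MM k N) (ha : a ∈ QN0 k N) :
    ∑ μ, (-1 : k) ^ (q μ) • ((f μ : MM k N) * a * (e μ : MM k N)) = 0 := by
  have hterm : ∀ μ, (-1 : k) ^ (q μ) • ((f μ : MM k N) * a * (e μ : MM k N)) =
      -((f μ : MM k N) * (a * parityMat) * (e μ : MM k N) * parityMat) := by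
    intro μ
    have h := parityMat_mul_mul_parityMat (he μ)
    rw [show (f μ : MM k N) * (a * parityMat) * (e μ : MM k N) * parityMat =
        (f μ : MM k N) * a * (parityMat * (e μ : MM k N) * parityMat) by simp only [mul_assoc],
      h, mul_smul_comm, pow_succ, mul_neg_one, neg_smul, neg_neg]
  obtain ⟨A, rfl⟩ := mem_QN0_iff.mp ha
  rw [Finset.sum_congr rfl fun μ _ => hterm μ, Finset.sum_neg_distrib, ← Finset.sum_mul,
    sum_dual_mul_mul e f hdual]
  simp [parityMat, fromBlocks_multiply]

/-- For homogeneous dual bases `(e_μ)`, `(e^μ)` of `Q(N)` with respect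
to `g(X,Y) = otr(XY)`, and every even element `a` of `Q(N)`:
`Σ_μ (−1)^{|e^μ|} e^μ·a·e_μ = 0`. -/
theorem queer_algebra_even_insertion_vanishes
    (k : Type*) [Field k] [CharZero k] (N : ℕ) (hN : 1 ≤ N)
    {ι : Type*} [Fintype ι] [DecidableEq ι]
    (e : Module.Basis ι k ↥(QN k N)) (f : ι → ↥(QN k N)) (q : ι → ℕ)
    (hf : ∀ μ, QHomog k N (q μ) (f μ : MM k N))
    (he : ∀ μ, QHomog k N (q μ + 1) (e μ : MM k N))
    (hdual : ∀ μ ν, otr k N ((f μ : MM k N) * (e ν : MM k N)) =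
      if μ = ν then 1 else 0)
    (a : MM k N) (ha : a ∈ QN0 k N) :
    ∑ μ, (-1 : k) ^ (q μ) • ((f μ : MM k N) * a * (e μ : MM k N)) = 0 :=
  queer_algebra_even_insertion_vanishes_general k N e f q he hdual a ha
end
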